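/- For a symmetric cubical hypermatrix A of order N with side length d, hdet(A) = E_d^(N) * (hvec_{1/N}(A), ..., hvec_{1/N}(A)), where E_d^(N) := (1/d!) (⊗_{k=1}^{N} ε) * (D_d^(N), ..., D_d^(N)) is an order-d cubical hypermatrix of side length C(d+N-1, N) and the product uses d copies of hvec_{1/N}(A). -/
import Mathlib


/-- The 1-based placement `P(i_1,...,i_N) = C(d+N-1,N) - Σ_{k=1}^N C(d+k-(i_k+1), k)`
of a weakly decreasing tuple in the reflected lexicographic order (entries
written 1-based as `(f k : ℕ) + 1`). -/
def posNum {N d : ℕ} (f : Fin N → Fin d) : ℕ :=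
  (d + N - 1).choose N -
    ∑ k : Fin N, (d + (k.1 + 1) - (((f k : ℕ) + 1) + 1)).choose (k.1 + 1)

/-- The 0-based position in `Fin (C(d+N-1,N))` corresponding to `posNum`. -/
def posIdx {N d : ℕ} (hd : 0 < d) (f : Fin N → Fin d) :
    Fin ((d + N - 1).choose N) :=
  ⟨posNum f - 1, by
    have hC : 0 < (d + N - 1).choose N := Nat.choose_pos (by omega)
    have h1 : posNum f ≤ (d + N - 1).choose N := Nat.sub_le _ _
    omega⟩

/-- The canonical vectorization `hvec(A) ∈ F^{d^N}` of a cubical hypermatrix. -/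
def hvec {F : Type*} [Field F] {N d : ℕ} (A : (Fin N → Fin d) → F) :
    Fin (d ^ N) → F :=
  fun m => A (finFunctionFinEquiv.symm m)

/-- The `1/N`-th hypermatrix vectorization
`hvec_{1/N}(A) = Σ_{d ≥ i_1 ≥ ... ≥ i_N ≥ 1} a_{i_1...i_N} u_{i_1...i_N}`. -/
noncomputable def hvec1N {F : Type*} [Field F] {N d : ℕ} (hd : 0 < d)
    (A : (Fin N → Fin d) → F) : Fin ((d + N - 1).choose N) → F :=
  ∑ i ∈ Finset.univ.filter (fun i : Fin N → Fin d => ∀ a b : Fin N, a ≤ b → i b ≤ i a),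
    A i • (Pi.single (posIdx hd i) (1 : F) : Fin ((d + N - 1).choose N) → F)

/-- Cayley's first hyperdeterminant. -/
noncomputable def hdet {F : Type*} [Field F] {N d : ℕ}
    (A : (Fin N → Fin d) → F) : F :=
  (Nat.factorial d : F)⁻¹ *
    ∑ σ : Fin N → Equiv.Perm (Fin d),
      (∏ k, ((Equiv.Perm.sign (σ k) : ℤ) : F)) * ∏ i, A fun k => σ k i

/-- The `d`-dimensional Levi-Civita symbol. -/
noncomputable def leviCivita {F : Type*} [Field F] (d : ℕ) (j : Fin d → Fin d) : F :=
  if h : Function.Bijective j then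
    ((Equiv.Perm.sign (Equiv.ofBijective j h) : ℤ) : F) else 0

/-- The orbit of the index tuple `i` under the coordinate-permuting `S_N`-action. -/
def permClass {N d : ℕ} (i : Fin N → Fin d) : Finset (Fin N → Fin d) :=
  Finset.univ.filter fun j => ∃ σ : Equiv.Perm (Fin N), (fun k => i (σ k)) = j

/-- The generalized duplication matrix `D_d^(N)`. -/
noncomputable def dupMatrix (F : Type*) [Field F] (N d : ℕ) (hd : 0 < d) :
    Matrix (Fin (d ^ N)) (Fin ((d + N - 1).choose N)) F :=
  ∑ i ∈ Finset.univ.filter (fun i : Fin N → Fin d => ∀ a b : Fin N, a ≤ b → i b ≤ i a),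
    Matrix.of fun r c =>
      (∑ j ∈ permClass i, (Pi.single (finFunctionFinEquiv j) (1 : F) : Fin (d ^ N) → F) r) *
        (Pi.single (posIdx hd i) (1 : F) : Fin ((d + N - 1).choose N) → F) c

/-- The order-`d` hypermatrix `E_d^(N) = (1/d!)(⊗_{k=1}^N ε) * (D_d^(N),...,D_d^(N))`
of side length `C(d+N-1,N)`: the `N`-fold Kronecker power of `ε` at
`(c_1,...,c_d)` is `Π_{k=1}^N ε` applied to the `k`-th base-`d` digits of the `c_l`. -/
noncomputable def EdN (F : Type*) [Field F] (N d : ℕ) (hd : 0 < d) :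
    (Fin d → Fin ((d + N - 1).choose N)) → F :=
  fun j => (Nat.factorial d : F)⁻¹ *
    ∑ c : Fin d → Fin (d ^ N),
      (∏ k : Fin N, leviCivita d (fun l => finFunctionFinEquiv.symm (c l) k)) *
        ∏ l : Fin d, dupMatrix F N d hd (c l) (j l)



lemma cns_bound : ∀ (N : ℕ) (m : Fin (N+1) → ℕ), StrictMono m →
    ∑ k : Fin (N+1), (m k).choose (k.1+1) < (m (Fin.last N) + 1).choose (N+1) := by
  intro N
  induction N with
  | zero =>
    intro m _
    simp [Nat.choose_one_right, Fin.last]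
  | succ n ih =>
    intro m hm
    rw [Fin.sum_univ_castSucc]
    have h1 : StrictMono (fun k : Fin (n+1) => m k.castSucc) :=
      fun a b hab => hm (by simpa using hab)
    have h2 := ih _ h1
    have h3 : m ((Fin.last n).castSucc) + 1 ≤ m (Fin.last (n+1)) :=
      hm (Fin.castSucc_lt_last _)
    have h4 : (m ((Fin.last n).castSucc) + 1).choose (n+1) ≤ (m (Fin.last (n+1))).choose (n+1) :=
      Nat.choose_le_choose _ h3
    have h5 : (m (Fin.last (n+1)) + 1).choose (n+1+1) =
        (m (Fin.last (n+1))).choose (n+1) + (m (Fin.last (n+1))).choose (n+1+1) :=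
      Nat.choose_succ_succ _ _
    simp only [Fin.coe_castSucc, Fin.val_last] at *
    omega

lemma cns_inj : ∀ (N : ℕ) (m m' : Fin N → ℕ), StrictMono m → StrictMono m' →
    (∑ k : Fin N, (m k).choose (k.1+1)) = (∑ k : Fin N, (m' k).choose (k.1+1)) → m = m' := by
  intro N
  induction N with
  | zero => intro m m' _ _ _; funext k; exact k.elim0
  | succ n ih =>
    intro m m' hm hm' hsum
    have key : ∀ (a b : Fin (n+1) → ℕ), StrictMono a → StrictMono b →
        (∑ k : Fin (n+1), (a k).choose (k.1+1)) = (∑ k : Fin (n+1), (b k).choose (k.1+1)) →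
        ¬ (a (Fin.last n) < b (Fin.last n)) := by
      intro a b ha hb hab hlt
      have h1 := cns_bound n a ha
      have h2 : (a (Fin.last n) + 1).choose (n+1) ≤ (b (Fin.last n)).choose (n+1) :=
        Nat.choose_le_choose _ hlt
      have h3 : (b (Fin.last n)).choose ((Fin.last n).1+1) ≤
          ∑ k : Fin (n+1), (b k).choose (k.1+1) :=
        Finset.single_le_sum (f := fun k : Fin (n+1) => (b k).choose (k.1+1))
          (fun _ _ => Nat.zero_le _) (Finset.mem_univ (Fin.last n))
      simp only [Fin.val_last] at *
      omega
    have hlast : m (Fin.last n) = m' (Fin.last n) :=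
      le_antisymm (not_lt.1 (key m' m hm' hm hsum.symm)) (not_lt.1 (key m m' hm hm' hsum))
    rw [Fin.sum_univ_castSucc, Fin.sum_univ_castSucc] at hsum
    simp only [Fin.val_last, hlast] at hsum
    have hsum' : (∑ k : Fin n, (m k.castSucc).choose (k.1+1)) =
        ∑ k : Fin n, (m' k.castSucc).choose (k.1+1) := by
      simp only [Fin.coe_castSucc] at hsum ⊢
      omega
    have hinit := ih (fun k => m k.castSucc) (fun k => m' k.castSucc)
      (fun a b hab => hm (by simpa using hab)) (fun a b hab => hm' (by simpa using hab)) hsum'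
    funext k
    rcases Fin.eq_castSucc_or_eq_last k with ⟨j, rfl⟩ | rfl
    · exact congrFun hinit j
    · exact hlast

/-- The strictly increasing sequence associated to a weakly decreasing tuple. -/
def cnsSeq {N d : ℕ} (f : Fin N → Fin d) : Fin N → ℕ := fun k => d + k.1 - 1 - (f k : ℕ)

lemma cnsSeq_strictMono {N d : ℕ} {f : Fin N → Fin d}
    (hf : ∀ a b : Fin N, a ≤ b → f b ≤ f a) : StrictMono (cnsSeq f) := by
  intro a b hab
  have h1 : (f b : ℕ) ≤ (f a : ℕ) := hf a b hab.le
  have h2 : (f a : ℕ) < d := (f a).2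
  have h3 : a.1 < b.1 := hab
  simp only [cnsSeq]
  omega

lemma posNum_eq {N d : ℕ} (hd : 0 < d) (f : Fin N → Fin d) :
    posNum f = (d + N - 1).choose N - ∑ k : Fin N, (cnsSeq f k).choose (k.1+1) := by
  unfold posNum
  congr 1
  apply Finset.sum_congr rfl
  intro k _
  congr 1
  have := (f k).2
  simp only [cnsSeq]
  omega

lemma cnsSum_lt {N d : ℕ} (hd : 0 < d) (hN : 0 < N) {f : Fin N → Fin d}
    (hf : ∀ a b : Fin N, a ≤ b → f b ≤ f a) :
    ∑ k : Fin N, (cnsSeq f k).choose (k.1+1) < (d + N - 1).choose N := by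
  obtain ⟨n, rfl⟩ := Nat.exists_eq_succ_of_ne_zero hN.ne'
  have h1 := cns_bound n (cnsSeq f) (cnsSeq_strictMono hf)
  have h2 : cnsSeq f (Fin.last n) + 1 ≤ d + (n+1) - 1 := by
    simp only [cnsSeq, Fin.val_last]; omega
  exact h1.trans_le (Nat.choose_le_choose _ h2)

lemma posNum_inj {N d : ℕ} (hd : 0 < d) {f g : Fin N → Fin d}
    (hf : ∀ a b : Fin N, a ≤ b → f b ≤ f a) (hg : ∀ a b : Fin N, a ≤ b → g b ≤ g a)
    (h : posNum f = posNum g) : f = g := by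
  rcases Nat.eq_zero_or_pos N with rfl | hN
  · funext k; exact k.elim0
  rw [posNum_eq hd, posNum_eq hd] at h
  have hfs := cnsSum_lt hd hN hf
  have hgs := cnsSum_lt hd hN hg
  have hsum : (∑ k : Fin N, (cnsSeq f k).choose (k.1+1)) =
      ∑ k : Fin N, (cnsSeq g k).choose (k.1+1) := by omega
  have := cns_inj N _ _ (cnsSeq_strictMono hf) (cnsSeq_strictMono hg) hsum
  funext k
  have hk := congrFun this k
  have h2 : (f k : ℕ) < d := (f k).2
  have h3 : (g k : ℕ) < d := (g k).2
  simp only [cnsSeq] at hk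
  exact Fin.ext (by omega)

lemma posIdx_inj {N d : ℕ} (hd : 0 < d) {f g : Fin N → Fin d}
    (hf : ∀ a b : Fin N, a ≤ b → f b ≤ f a) (hg : ∀ a b : Fin N, a ≤ b → g b ≤ g a)
    (h : posIdx hd f = posIdx hd g) : f = g := by
  apply posNum_inj hd hf hg
  have h' : posNum f - 1 = posNum g - 1 := congrArg Fin.val h
  have hfpos : 1 ≤ posNum f := by
    rcases Nat.eq_zero_or_pos N with rfl | hN
    · simp [posNum]
    · have := cnsSum_lt hd hN hf; rw [posNum_eq hd]; omega
  have hgpos : 1 ≤ posNum g := by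
    rcases Nat.eq_zero_or_pos N with rfl | hN
    · simp [posNum]
    · have := cnsSum_lt hd hN hg; rw [posNum_eq hd]; omega
  omega

lemma single_mul_single_sum {F : Type*} [Field F] {n : ℕ} (a b : Fin n) :
    ∑ j : Fin n, (Pi.single a (1:F) : Fin n → F) j * (Pi.single b (1:F) : Fin n → F) j = if a = b then 1 else 0 := by
  simp only [Pi.single_apply]
  rw [Finset.sum_eq_single b]
  · simp [eq_comm]
  · intro c _ hcb; simp [hcb]
  · simp

lemma sum_dup_vec {F : Type*} [Field F] {N d : ℕ} (hd : 0 < d)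
    (A : (Fin N → Fin d) → F)
    (hA : ∀ σ : Equiv.Perm (Fin N), ∀ i : Fin N → Fin d, A (fun k => i (σ k)) = A i)
    (r : Fin (d ^ N)) :
    ∑ j : Fin ((d + N - 1).choose N), dupMatrix F N d hd r j * hvec1N hd A j
      = A (finFunctionFinEquiv.symm r) := by
  classical
  set D : Finset (Fin N → Fin d) :=
    Finset.univ.filter (fun i : Fin N → Fin d => ∀ a b : Fin N, a ≤ b → i b ≤ i a) with hD
  set i₀ : Fin N → Fin d := finFunctionFinEquiv.symm r with hi₀
  set σ : Equiv.Perm (Fin N) := Tuple.sort (fun k => OrderDual.toDual (i₀ k)) with hσdef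
  set s : Fin N → Fin d := fun k => i₀ (σ k) with hs
  have hsmono : ∀ a b : Fin N, a ≤ b → s b ≤ s a := by
    intro a b hab
    exact Tuple.monotone_sort (fun k => OrderDual.toDual (i₀ k)) hab
  have hsD : s ∈ D := by
    rw [hD, Finset.mem_filter]
    exact ⟨Finset.mem_univ _, hsmono⟩
  have hmem : i₀ ∈ permClass s := by
    rw [permClass, Finset.mem_filter]
    refine ⟨Finset.mem_univ _, σ⁻¹, ?_⟩
    funext k
    show i₀ (σ (σ⁻¹ k)) = i₀ k
    simp
  have huniq : ∀ i : Fin N → Fin d, (∀ a b : Fin N, a ≤ b → i b ≤ i a) →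
      i₀ ∈ permClass i → i = s := by
    intro i hi hmem'
    rw [permClass, Finset.mem_filter] at hmem'
    obtain ⟨-, τ, hτ⟩ := hmem'
    have h1 : Monotone ((fun k => OrderDual.toDual (i k)) ∘ (σ.trans τ)) := by
      intro a b hab
      have : ∀ k, i (τ (σ k)) = s k := fun k => congrFun hτ (σ k)
      simp only [Function.comp_apply, Equiv.trans_apply, this]
      exact OrderDual.toDual_le_toDual.2 (hsmono a b hab)
    have h2 : Monotone ((fun k => OrderDual.toDual (i k)) ∘ (Equiv.refl (Fin N))) := by
      intro a b hab
      exact OrderDual.toDual_le_toDual.2 (hi a b hab)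
    have h3 := Tuple.unique_monotone h1 h2
    funext k
    have h4 := congrFun h3 k
    simp only [Function.comp_apply, Equiv.trans_apply, Equiv.refl_apply] at h4
    have h5 : i (τ (σ k)) = s k := congrFun hτ (σ k)
    rw [← h5]
    exact (OrderDual.toDual_inj.mp h4).symm
  have expand : ∀ j : Fin ((d + N - 1).choose N),
      dupMatrix F N d hd r j * hvec1N hd A j =
      ∑ i ∈ D, ∑ i' ∈ D,
        ((∑ p ∈ permClass i, (Pi.single (finFunctionFinEquiv p) (1:F) : Fin (d ^ N) → F) r) * A i') *
          ((Pi.single (posIdx hd i) (1:F) : Fin ((d + N - 1).choose N) → F) j * (Pi.single (posIdx hd i') (1:F) : Fin ((d + N - 1).choose N) → F) j) := by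
    intro j
    unfold dupMatrix hvec1N
    rw [Matrix.sum_apply, Finset.sum_apply, Finset.sum_mul_sum]
    refine Finset.sum_congr rfl fun i _ => ?_
    refine Finset.sum_congr rfl fun i' _ => ?_
    simp only [Matrix.of_apply, Pi.smul_apply, smul_eq_mul]
    ring
  simp only [expand]
  rw [Finset.sum_comm]
  have step1 : ∀ i ∈ D,
      (∑ j : Fin ((d + N - 1).choose N), ∑ i' ∈ D,
        ((∑ p ∈ permClass i, (Pi.single (finFunctionFinEquiv p) (1:F) : Fin (d ^ N) → F) r) * A i') *
          ((Pi.single (posIdx hd i) (1:F) : Fin ((d + N - 1).choose N) → F) j * (Pi.single (posIdx hd i') (1:F) : Fin ((d + N - 1).choose N) → F) j))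
      = (∑ p ∈ permClass i, (Pi.single (finFunctionFinEquiv p) (1:F) : Fin (d ^ N) → F) r) * A i := by
    intro i hiD
    rw [Finset.sum_comm]
    have inner : ∀ i' ∈ D,
        (∑ j : Fin ((d + N - 1).choose N),
          ((∑ p ∈ permClass i, (Pi.single (finFunctionFinEquiv p) (1:F) : Fin (d ^ N) → F) r) * A i') *
            ((Pi.single (posIdx hd i) (1:F) : Fin ((d + N - 1).choose N) → F) j * (Pi.single (posIdx hd i') (1:F) : Fin ((d + N - 1).choose N) → F) j))
        = ((∑ p ∈ permClass i, (Pi.single (finFunctionFinEquiv p) (1:F) : Fin (d ^ N) → F) r) * A i') *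
            (if i = i' then 1 else 0) := by
      intro i' hi'D
      rw [← Finset.mul_sum, single_mul_single_sum]
      congr 1
      rw [hD, Finset.mem_filter] at hiD hi'D
      by_cases h : i = i'
      · simp [h]
      · have : posIdx hd i ≠ posIdx hd i' := fun he => h (posIdx_inj hd hiD.2 hi'D.2 he)
        simp [h, this]
    rw [Finset.sum_congr rfl inner]
    rw [Finset.sum_eq_single_of_mem i hiD]
    · simp
    · intro i' _ hne
      rw [if_neg (fun h => hne h.symm), mul_zero]
  rw [Finset.sum_congr rfl step1]
  have singlesum : ∀ i : Fin N → Fin d,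
      (∑ p ∈ permClass i, (Pi.single (finFunctionFinEquiv p) (1:F) : Fin (d ^ N) → F) r)
      = if i₀ ∈ permClass i then 1 else 0 := by
    intro i
    rw [← Finset.sum_ite_eq (permClass i) i₀ (fun _ => (1:F))]
    refine Finset.sum_congr rfl fun p _ => ?_
    rw [Pi.single_apply]
    congr 1
    simp only [eq_iff_iff]
    rw [hi₀, Equiv.symm_apply_eq]
  simp only [singlesum]
  rw [Finset.sum_eq_single_of_mem s hsD]
  · rw [if_pos hmem, one_mul, hs]
    exact hA σ i₀
  · intro i hiD hne
    rw [hD, Finset.mem_filter] at hiD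
    rw [if_neg, zero_mul]
    intro hmem'
    exact hne (huniq i hiD.2 hmem')

/-- For a symmetric cubical hypermatrix `A`,
`hdet(A) = E_d^(N) * (hvec_{1/N}(A), ..., hvec_{1/N}(A))`. -/
theorem stmt16 {F : Type*} [Field F] [CharZero F] (N d : ℕ) (hd : 0 < d)
    (A : (Fin N → Fin d) → F)
    (hA : ∀ σ : Equiv.Perm (Fin N), ∀ i : Fin N → Fin d,
      A (fun k => i (σ k)) = A i) :
    hdet A = ∑ j : Fin d → Fin ((d + N - 1).choose N),
      EdN F N d hd j * ∏ l : Fin d, hvec1N hd A (j l) := by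
  classical
  symm
  have key : ∀ c : Fin d → Fin (d ^ N),
      (∑ j : Fin d → Fin ((d + N - 1).choose N),
        ∏ l : Fin d, (dupMatrix F N d hd (c l) (j l) * hvec1N hd A (j l)))
      = ∏ l : Fin d, A (finFunctionFinEquiv.symm (c l)) := by
    intro c
    rw [← Fintype.prod_sum (fun l j₀ => dupMatrix F N d hd (c l) j₀ * hvec1N hd A j₀)]
    exact Finset.prod_congr rfl fun l _ => sum_dup_vec hd A hA (c l)
  have step1 : (∑ j : Fin d → Fin ((d + N - 1).choose N),
      EdN F N d hd j * ∏ l, hvec1N hd A (j l))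
      = (Nat.factorial d : F)⁻¹ * ∑ c : Fin d → Fin (d ^ N),
          (∏ k : Fin N, leviCivita d (fun l => finFunctionFinEquiv.symm (c l) k)) *
            ∏ l : Fin d, A (finFunctionFinEquiv.symm (c l)) := by
    simp only [EdN, mul_assoc]
    rw [← Finset.mul_sum]
    congr 1
    simp only [Finset.sum_mul]
    rw [Finset.sum_comm]
    refine Finset.sum_congr rfl fun c _ => ?_
    rw [← key c, Finset.mul_sum]
    refine Finset.sum_congr rfl fun j _ => ?_
    rw [Finset.prod_mul_distrib]
    ring
  rw [step1, hdet]
  congr 1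
  have step2 : (∑ c : Fin d → Fin (d ^ N),
      (∏ k : Fin N, leviCivita d (fun l => finFunctionFinEquiv.symm (c l) k)) *
        ∏ l : Fin d, A (finFunctionFinEquiv.symm (c l)))
      = ∑ G : Fin d → (Fin N → Fin d),
          (∏ k : Fin N, leviCivita d (fun l => G l k)) * ∏ l : Fin d, A (G l) := by
    apply Fintype.sum_equiv
      (Equiv.piCongrRight fun _ : Fin d => ((finFunctionFinEquiv : (Fin N → Fin d) ≃ Fin (d ^ N))).symm)
    intro c
    simp [Equiv.piCongrRight]
  rw [step2]
  set B : Finset (Fin d → (Fin N → Fin d)) :=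
    Finset.univ.filter (fun G => ∀ k, Function.Bijective (fun l => G l k)) with hB
  have hvanish : ∀ G ∈ Finset.univ, G ∉ B →
      (∏ k : Fin N, leviCivita (F := F) d (fun l => G l k)) * ∏ l : Fin d, A (G l) = 0 := by
    intro G _ hG
    rw [hB, Finset.mem_filter] at hG
    simp only [Finset.mem_univ, true_and, not_forall] at hG
    obtain ⟨k, hk⟩ := hG
    have hz : leviCivita (F := F) d (fun l => G l k) = 0 := dif_neg hk
    rw [Finset.prod_eq_zero (Finset.mem_univ k) hz, zero_mul]
  rw [← Finset.sum_subset (Finset.subset_univ B) hvanish]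
  refine Finset.sum_bij'
    (i := fun G hG => fun k =>
      Equiv.ofBijective (fun l => G l k) ((Finset.mem_filter.mp hG).2 k))
    (j := fun σ _ => fun l k => σ k l) ?_ ?_ ?_ ?_ ?_
  · intro G hG
    exact Finset.mem_univ _
  · intro σ _
    rw [hB, Finset.mem_filter]
    exact ⟨Finset.mem_univ _, fun k => (σ k).bijective⟩
  · intro G hG
    funext l k
    simp [Equiv.ofBijective]
  · intro σ _
    funext k
    ext l
    simp [Equiv.ofBijective]
  · intro G hG
    congr 1
    · refine Finset.prod_congr rfl fun k _ => ?_
      rw [leviCivita, dif_pos ((Finset.mem_filter.mp hG).2 k)]
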